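/- arXiv:2210.06232 — 3 statements merged into one kernel-verified Lean document; each statement's English description precedes it below -/
import Mathlib

section
/- Let D₁, D₂, D₃ be skew-symmetric real N×N matrices, let 𝔻 be the 3N×3N block matrix [[0, −D₃, D₂], [D₃, 0, −D₁], [−D₂, D₁, 0]], and for μ, ε > 0 let 𝒟 := (1/√(με))·[[0, −𝔻], [𝔻, 0]] (a 6N×6N block matrix). Then 𝔻 is symmetric (𝔻ᵀ = 𝔻), 𝒟 is skew-symmetric (𝒟ᵀ = −𝒟), and for every real t the matrix exponential exp(t𝒟) is orthogonal; in particular ‖exp(t𝒟)u‖ = ‖u‖ for every u ∈ ℝ^(6N), where ‖·‖ is the Euclidean norm. -/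
/-! Transposing the curl matrix swaps the blocks `±Dᵢ` across the diagonal, and skew-symmetry of
each `Dᵢ` flips their sign back, so `𝔻` is symmetric and `𝒟` is skew-symmetric. For skew-symmetric
`A`, `(exp A)ᵀ = exp (-A)` is the inverse of `exp A`, and orthogonal matrices preserve the
Euclidean inner product. -/

open Matrix

def blockMat3 {N : ℕ} {α : Type*} (A : Fin 3 → Fin 3 → Matrix (Fin N) (Fin N) α) :
    Matrix (Fin 3 × Fin N) (Fin 3 × Fin N) α :=
  Matrix.of fun p q => A p.1 q.1 p.2 q.2

lemma blockMat3_transpose {N : ℕ} {α : Type*} (A : Fin 3 → Fin 3 → Matrix (Fin N) (Fin N) α) :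
    (blockMat3 A)ᵀ = blockMat3 fun i j => (A j i)ᵀ :=
  rfl

lemma blockMat3_curl_transpose {N : ℕ} {α : Type*} [AddGroup α]
    {D1 D2 D3 : Matrix (Fin N) (Fin N) α} (hD1 : D1ᵀ = -D1) (hD2 : D2ᵀ = -D2)
    (hD3 : D3ᵀ = -D3) :
    (blockMat3 ![![0, -D3, D2], ![D3, 0, -D1], ![-D2, D1, 0]])ᵀ =
      blockMat3 ![![0, -D3, D2], ![D3, 0, -D1], ![-D2, D1, 0]] := by
  rw [blockMat3_transpose]
  congr 1
  ext i j : 2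
  fin_cases i <;> fin_cases j <;> simp [hD1, hD2, hD3]

lemma fromBlocks_zero_neg_transpose {n R : Type*} [AddGroup R] {B : Matrix n n R}
    (hB : Bᵀ = B) :
    (fromBlocks 0 (-B) B 0)ᵀ = -fromBlocks 0 (-B) B 0 := by
  rw [fromBlocks_transpose, fromBlocks_neg, transpose_neg, hB, transpose_zero, neg_zero, neg_neg]

lemma transpose_mul_exp_self_of_transpose_eq_neg {m 𝔸 : Type*} [Fintype m] [DecidableEq m]
    [NormedCommRing 𝔸] [NormedAlgebra ℚ 𝔸] [CompleteSpace 𝔸] {A : Matrix m m 𝔸}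
    (hA : Aᵀ = -A) :
    (NormedSpace.exp A)ᵀ * NormedSpace.exp A = 1 := by
  rw [← exp_transpose, hA, ← exp_add_of_commute _ _ (Commute.refl A).neg_left, neg_add_cancel,
    NormedSpace.exp_zero]

lemma norm_toLp_mulVec_of_transpose_mul_self {n : Type*} [Fintype n] [DecidableEq n]
    {M : Matrix n n ℝ} (hM : Mᵀ * M = 1) (v : n → ℝ) :
    ‖WithLp.toLp 2 (M *ᵥ v)‖ = ‖WithLp.toLp 2 v‖ := by
  rw [norm_eq_sqrt_real_inner, norm_eq_sqrt_real_inner, EuclideanSpace.inner_toLp_toLp,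
    EuclideanSpace.inner_toLp_toLp, star_trivial, star_trivial, dotProduct_mulVec,
    ← vecMul_transpose, vecMul_vecMul, hM, vecMul_one]

theorem discrete_curl_skew_exp_orthogonal_general {N : ℕ} (μ ε : ℝ)
    (D1 D2 D3 : Matrix (Fin N) (Fin N) ℝ)
    (hD1 : D1ᵀ = -D1) (hD2 : D2ᵀ = -D2) (hD3 : D3ᵀ = -D3)
    (𝔻 : Matrix (Fin 3 × Fin N) (Fin 3 × Fin N) ℝ)
    (h𝔻 : 𝔻 = blockMat3 ![![0, -D3, D2], ![D3, 0, -D1], ![-D2, D1, 0]])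
    (𝒟 : Matrix ((Fin 3 × Fin N) ⊕ (Fin 3 × Fin N)) ((Fin 3 × Fin N) ⊕ (Fin 3 × Fin N)) ℝ)
    (h𝒟 : 𝒟 = (Real.sqrt (μ * ε))⁻¹ • Matrix.fromBlocks 0 (-𝔻) 𝔻 0) :
    𝔻ᵀ = 𝔻 ∧
    𝒟ᵀ = -𝒟 ∧
    (∀ t : ℝ,
      (NormedSpace.exp (t • 𝒟))ᵀ * NormedSpace.exp (t • 𝒟) = 1 ∧
      ∀ u : EuclideanSpace ℝ ((Fin 3 × Fin N) ⊕ (Fin 3 × Fin N)),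
        ‖(WithLp.equiv 2 (((Fin 3 × Fin N) ⊕ (Fin 3 × Fin N)) → ℝ)).symm
            ((NormedSpace.exp (t • 𝒟)).mulVec
              ((WithLp.equiv 2 (((Fin 3 × Fin N) ⊕ (Fin 3 × Fin N)) → ℝ)) u))‖ = ‖u‖) := by
  have h𝔻_symm : 𝔻ᵀ = 𝔻 := h𝔻 ▸ blockMat3_curl_transpose hD1 hD2 hD3
  have h𝒟_skew : 𝒟ᵀ = -𝒟 := by
    rw [h𝒟, transpose_smul, fromBlocks_zero_neg_transpose h𝔻_symm, smul_neg]
  refine ⟨h𝔻_symm, h𝒟_skew, fun t => ?_⟩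
  have horth := transpose_mul_exp_self_of_transpose_eq_neg (A := t • 𝒟)
    (by rw [transpose_smul, h𝒟_skew, smul_neg])
  exact ⟨horth, fun u => norm_toLp_mulVec_of_transpose_mul_self horth u⟩

/-- for skew-symmetric real `D₁, D₂, D₃`, the discrete curl matrix `𝔻` is
symmetric, `𝒟 = (1/√(με))[[0,-𝔻],[𝔻,0]]` is skew-symmetric, and `exp(t𝒟)` is orthogonal,
hence preserves the Euclidean norm on `ℝ^(6N)`. -/
theorem discrete_curl_skew_exp_orthogonal {N : ℕ} (μ ε : ℝ) (hμ : 0 < μ) (hε : 0 < ε)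
    (D1 D2 D3 : Matrix (Fin N) (Fin N) ℝ)
    (hD1 : D1ᵀ = -D1) (hD2 : D2ᵀ = -D2) (hD3 : D3ᵀ = -D3)
    (𝔻 : Matrix (Fin 3 × Fin N) (Fin 3 × Fin N) ℝ)
    (h𝔻 : 𝔻 = blockMat3 ![![0, -D3, D2], ![D3, 0, -D1], ![-D2, D1, 0]])
    (𝒟 : Matrix ((Fin 3 × Fin N) ⊕ (Fin 3 × Fin N)) ((Fin 3 × Fin N) ⊕ (Fin 3 × Fin N)) ℝ)
    (h𝒟 : 𝒟 = (Real.sqrt (μ * ε))⁻¹ • Matrix.fromBlocks 0 (-𝔻) 𝔻 0) :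
    𝔻ᵀ = 𝔻 ∧
    𝒟ᵀ = -𝒟 ∧
    (∀ t : ℝ,
      (NormedSpace.exp (t • 𝒟))ᵀ * NormedSpace.exp (t • 𝒟) = 1 ∧
      ∀ u : EuclideanSpace ℝ ((Fin 3 × Fin N) ⊕ (Fin 3 × Fin N)),
        ‖(WithLp.equiv 2 (((Fin 3 × Fin N) ⊕ (Fin 3 × Fin N)) → ℝ)).symm
            ((NormedSpace.exp (t • 𝒟)).mulVec
              ((WithLp.equiv 2 (((Fin 3 × Fin N) ⊕ (Fin 3 × Fin N)) → ℝ)) u))‖ = ‖u‖) :=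
  discrete_curl_skew_exp_orthogonal_general μ ε D1 D2 D3 hD1 hD2 hD3 𝔻 h𝔻 𝒟 h𝒟
end

section
/- Let N be a positive integer and μ, ε > 0 real. Let D₁, D₂, D₃ be pairwise commuting skew-symmetric real N×N matrices, 𝔻 := [[0, −D₃, D₂], [D₃, 0, −D₁], [−D₂, D₁, 0]] (3N×3N), and 𝒟 := (1/√(με))·[[0, −𝔻], [𝔻, 0]] (6N×6N). Given H⁰, E⁰ ∈ ℝ^(3N), define (√μ·H^t, √ε·E^t) = exp(t𝒟)·(√μ·H⁰, √ε·E⁰) and set Ḣ^t := −(1/μ)·𝔻·E^t, Ė^t := (1/ε)·𝔻·H^t. Then (1/(2ε))·⟨Ḣ^t, 𝔻Ḣ^t⟩ + (1/(2μ))·⟨Ė^t, 𝔻Ė^t⟩ = (1/(2ε))·⟨Ḣ⁰, 𝔻Ḣ⁰⟩ + (1/(2μ))·⟨Ė⁰, 𝔻Ė⁰⟩ for all t ∈ ℝ. -/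
/-!
Since the `Dᵢ` are skew-symmetric, the discrete curl `𝔻` is symmetric, hence `𝒟` is
skew-symmetric and `exp (t𝒟)` is orthogonal. Writing `u = (√μ H, √ε E)`, the helicity equals
`uᵀ S u / (2μ²ε²)` with `S = diag(𝔻³, 𝔻³)`; since `S` commutes with `𝒟`, it commutes with
`exp (t𝒟)`, so this quadratic form is conserved along `u_t = exp (t𝒟) u₀`.
-/

open Matrix

/-- The `3N × 3N` block-diagonal matrix with each diagonal block equal to `D`. -/
def blockDiag3 {N : ℕ} {α : Type*} [Zero α] (D : Matrix (Fin N) (Fin N) α) :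
    Matrix (Fin 3 × Fin N) (Fin 3 × Fin N) α :=
  Matrix.of fun p q => if p.1 = q.1 then D p.2 q.2 else 0

namespace Matrix

theorem blockMat3_transpose {N : ℕ} {α : Type*} (A : Fin 3 → Fin 3 → Matrix (Fin N) (Fin N) α) :
    (blockMat3 A)ᵀ = blockMat3 fun i j => (A j i)ᵀ :=
  rfl

theorem isSymm_curl {N : ℕ} {α : Type*} [AddGroup α] {D1 D2 D3 : Matrix (Fin N) (Fin N) α}
    (hD1 : D1ᵀ = -D1) (hD2 : D2ᵀ = -D2) (hD3 : D3ᵀ = -D3) :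
    (blockMat3 ![![0, -D3, D2], ![D3, 0, -D1], ![-D2, D1, 0]]).IsSymm := by
  rw [IsSymm, blockMat3_transpose]
  congr 1
  funext i j
  fin_cases i <;> fin_cases j <;> simp [hD1, hD2, hD3]

variable {n : Type*}

theorem transpose_fromBlocks_zero_neg_self_zero {α : Type*} [AddGroup α] {A : Matrix n n α}
    (hA : A.IsSymm) : (fromBlocks 0 (-A) A 0)ᵀ = -fromBlocks 0 (-A) A 0 := by
  simp [fromBlocks_transpose, fromBlocks_neg, hA.eq]

theorem commute_fromBlocks_zero_neg_self_zero {α : Type*} [Fintype n] [Ring α]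
    {A B : Matrix n n α} (hAB : Commute A B) :
    Commute (fromBlocks 0 (-A) A 0) (fromBlocks B 0 0 B) := by
  simp [Commute, SemiconjBy, fromBlocks_multiply, hAB.eq]

theorem mulVec_dotProduct_mulVec_mulVec {α : Type*} [Fintype n] [CommSemiring α]
    (A B : Matrix n n α) (u : n → α) :
    (A *ᵥ u) ⬝ᵥ (B *ᵥ (A *ᵥ u)) = u ⬝ᵥ ((Aᵀ * B * A) *ᵥ u) := by
  rw [dotProduct_comm, dotProduct_mulVec, vecMul_mulVec, ← dotProduct_mulVec, dotProduct_comm,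
    ← vecMul_transpose, ← dotProduct_mulVec, mulVec_mulVec, transpose_mul, transpose_transpose]

theorem sumElim_dotProduct_fromBlocks_mulVec_sumElim {m α : Type*} [Fintype n] [Fintype m]
    [CommSemiring α] (A : Matrix n n α) (B : Matrix m m α) (x : n → α) (y : m → α) :
    Sum.elim x y ⬝ᵥ (fromBlocks A 0 0 B *ᵥ Sum.elim x y) = x ⬝ᵥ (A *ᵥ x) + y ⬝ᵥ (B *ᵥ y) := by
  simp [fromBlocks_mulVec, sumElim_dotProduct_sumElim]

section Exp

open NormedSpace

variable [Fintype n] [DecidableEq n] {𝔸 : Type*} [NormedCommRing 𝔸] [NormedAlgebra ℚ 𝔸]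
  [CompleteSpace 𝔸]

theorem transpose_exp_mul_exp {X : Matrix n n 𝔸} (hX : Xᵀ = -X) : (exp X)ᵀ * exp X = 1 := by
  rw [← exp_transpose, hX, ← exp_add_of_commute _ _ (Commute.refl X).neg_left, neg_add_cancel,
    exp_zero]

theorem exp_mulVec_dotProduct_mulVec_exp_mulVec {X S : Matrix n n 𝔸} (hX : Xᵀ = -X)
    (hXS : Commute X S) (u : n → 𝔸) :
    (exp X *ᵥ u) ⬝ᵥ (S *ᵥ (exp X *ᵥ u)) = u ⬝ᵥ (S *ᵥ u) := by
  rw [mulVec_dotProduct_mulVec_mulVec, Matrix.mul_assoc, ← hXS.exp_left.eq, ← Matrix.mul_assoc,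
    transpose_exp_mul_exp hX, Matrix.one_mul]

end Exp

end Matrix

theorem helicity_eq_sumElim_dotProduct_fromBlocks_pow_three {n : Type*} [Fintype n]
    [DecidableEq n] {μ ε : ℝ} (hμ : 0 < μ) (hε : 0 < ε) {𝔻 : Matrix n n ℝ} (h𝔻 : 𝔻.IsSymm) (h e : n → ℝ) :
    (1 / (2 * ε)) * (((-(1 / μ)) • 𝔻 *ᵥ e) ⬝ᵥ 𝔻 *ᵥ ((-(1 / μ)) • 𝔻 *ᵥ e)) +
        (1 / (2 * μ)) * (((1 / ε) • 𝔻 *ᵥ h) ⬝ᵥ 𝔻 *ᵥ ((1 / ε) • 𝔻 *ᵥ h)) =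
      1 / (2 * μ ^ 2 * ε ^ 2) *
        (Sum.elim (fun i => √μ * h i) (fun i => √ε * e i) ⬝ᵥ
          (fromBlocks (𝔻 ^ 3) 0 0 (𝔻 ^ 3) *ᵥ Sum.elim (fun i => √μ * h i) (fun i => √ε * e i))) := by
  have hcube : 𝔻ᵀ * 𝔻 * 𝔻 = 𝔻 ^ 3 := by rw [h𝔻.eq, pow_three, Matrix.mul_assoc]
  have hμ' : √μ * √μ = μ := Real.mul_self_sqrt hμ.le
  have hε' : √ε * √ε = ε := Real.mul_self_sqrt hε.le
  have hH : (fun i => √μ * h i) = √μ • h := rfl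
  have hE : (fun i => √ε * e i) = √ε • e := rfl
  simp only [hH, hE, sumElim_dotProduct_fromBlocks_mulVec_sumElim, mulVec_smul, smul_dotProduct,
    dotProduct_smul, mulVec_dotProduct_mulVec_mulVec, hcube, smul_eq_mul]
  rw [← mul_assoc √μ, hμ', ← mul_assoc √ε, hε']
  field_simp
  ring

theorem discrete_helicity_conservation_H2_general {N : ℕ} (μ ε : ℝ) (hμ : 0 < μ) (hε : 0 < ε)
    (D1 D2 D3 : Matrix (Fin N) (Fin N) ℝ)
    (hD1 : D1ᵀ = -D1) (hD2 : D2ᵀ = -D2) (hD3 : D3ᵀ = -D3)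
    (𝔻 : Matrix (Fin 3 × Fin N) (Fin 3 × Fin N) ℝ)
    (h𝔻 : 𝔻 = blockMat3 ![![0, -D3, D2], ![D3, 0, -D1], ![-D2, D1, 0]])
    (𝒟 : Matrix ((Fin 3 × Fin N) ⊕ (Fin 3 × Fin N)) ((Fin 3 × Fin N) ⊕ (Fin 3 × Fin N)) ℝ)
    (h𝒟 : 𝒟 = (Real.sqrt (μ * ε))⁻¹ • Matrix.fromBlocks 0 (-𝔻) 𝔻 0)
    (H E : ℝ → (Fin 3 × Fin N → ℝ))
    (hprop : ∀ t : ℝ,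
      Sum.elim (fun i => Real.sqrt μ * H t i) (fun i => Real.sqrt ε * E t i) =
        (NormedSpace.exp (t • 𝒟)).mulVec
          (Sum.elim (fun i => Real.sqrt μ * H 0 i) (fun i => Real.sqrt ε * E 0 i)))
    (Hdot Edot : ℝ → (Fin 3 × Fin N → ℝ))
    (hHdot : ∀ t : ℝ, Hdot t = (-(1 / μ)) • 𝔻.mulVec (E t))
    (hEdot : ∀ t : ℝ, Edot t = (1 / ε) • 𝔻.mulVec (H t)) :
    ∀ t : ℝ,
      (1 / (2 * ε)) * (Hdot t ⬝ᵥ 𝔻.mulVec (Hdot t)) +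
          (1 / (2 * μ)) * (Edot t ⬝ᵥ 𝔻.mulVec (Edot t)) =
        (1 / (2 * ε)) * (Hdot 0 ⬝ᵥ 𝔻.mulVec (Hdot 0)) +
          (1 / (2 * μ)) * (Edot 0 ⬝ᵥ 𝔻.mulVec (Edot 0)) := by
  intro t
  have h𝔻s : 𝔻.IsSymm := h𝔻 ▸ isSymm_curl hD1 hD2 hD3
  have h𝒟T : (t • 𝒟)ᵀ = -(t • 𝒟) := by
    rw [h𝒟, transpose_smul, transpose_smul, transpose_fromBlocks_zero_neg_self_zero h𝔻s,
      smul_neg, smul_neg]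
  have h𝒟S : Commute (t • 𝒟) (fromBlocks (𝔻 ^ 3) 0 0 (𝔻 ^ 3)) :=
    h𝒟 ▸ ((commute_fromBlocks_zero_neg_self_zero (Commute.self_pow 𝔻 3)).smul_left _).smul_left t
  simp only [hHdot, hEdot, helicity_eq_sumElim_dotProduct_fromBlocks_pow_three hμ hε h𝔻s]
  rw [hprop t, exp_mulVec_dotProduct_mulVec_exp_mulVec h𝒟T h𝒟S]

/-- the fully discrete exponential scheme exactly conserves the discrete helicity ℋ₂: `(1/(2ε))⟨Ḣᵗ, 𝔻Ḣᵗ⟩ + (1/(2μ))⟨Ėᵗ, 𝔻Ėᵗ⟩` is constant in `t`. -/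
theorem discrete_helicity_conservation_H2 {N : ℕ} (hN : 0 < N) (μ ε : ℝ) (hμ : 0 < μ) (hε : 0 < ε)
    (D1 D2 D3 : Matrix (Fin N) (Fin N) ℝ)
    (h12 : D1 * D2 = D2 * D1) (h13 : D1 * D3 = D3 * D1) (h23 : D2 * D3 = D3 * D2)
    (hD1 : D1ᵀ = -D1) (hD2 : D2ᵀ = -D2) (hD3 : D3ᵀ = -D3)
    (𝔻 : Matrix (Fin 3 × Fin N) (Fin 3 × Fin N) ℝ)
    (h𝔻 : 𝔻 = blockMat3 ![![0, -D3, D2], ![D3, 0, -D1], ![-D2, D1, 0]])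
    (𝒟 : Matrix ((Fin 3 × Fin N) ⊕ (Fin 3 × Fin N)) ((Fin 3 × Fin N) ⊕ (Fin 3 × Fin N)) ℝ)
    (h𝒟 : 𝒟 = (Real.sqrt (μ * ε))⁻¹ • Matrix.fromBlocks 0 (-𝔻) 𝔻 0)
    (H E : ℝ → (Fin 3 × Fin N → ℝ))
    (hprop : ∀ t : ℝ,
      Sum.elim (fun i => Real.sqrt μ * H t i) (fun i => Real.sqrt ε * E t i) =
        (NormedSpace.exp (t • 𝒟)).mulVec
          (Sum.elim (fun i => Real.sqrt μ * H 0 i) (fun i => Real.sqrt ε * E 0 i)))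
    (Hdot Edot : ℝ → (Fin 3 × Fin N → ℝ))
    (hHdot : ∀ t : ℝ, Hdot t = (-(1 / μ)) • 𝔻.mulVec (E t))
    (hEdot : ∀ t : ℝ, Edot t = (1 / ε) • 𝔻.mulVec (H t)) :
    ∀ t : ℝ,
      (1 / (2 * ε)) * (Hdot t ⬝ᵥ 𝔻.mulVec (Hdot t)) +
          (1 / (2 * μ)) * (Edot t ⬝ᵥ 𝔻.mulVec (Edot t)) =
        (1 / (2 * ε)) * (Hdot 0 ⬝ᵥ 𝔻.mulVec (Hdot 0)) +
          (1 / (2 * μ)) * (Edot 0 ⬝ᵥ 𝔻.mulVec (Edot 0)) :=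
  discrete_helicity_conservation_H2_general μ ε hμ hε D1 D2 D3 hD1 hD2 hD3 𝔻 h𝔻 𝒟 h𝒟 H E hprop Hdot
    Edot hHdot hEdot
end

section
/- Let N be a positive integer and μ, ε > 0 real. Let D₁, D₂, D₃ be pairwise commuting skew-symmetric real N×N matrices, 𝔻 := [[0, −D₃, D₂], [D₃, 0, −D₁], [−D₂, D₁, 0]] (3N×3N), and 𝒟 := (1/√(με))·[[0, −𝔻], [𝔻, 0]] (6N×6N). Given H⁰ = (H⁰_x, H⁰_y, H⁰_z), E⁰ = (E⁰_x, E⁰_y, E⁰_z) ∈ ℝ^(3N), define (√μ·H^t, √ε·E^t) = exp(t𝒟)·(√μ·H⁰, √ε·E⁰) and write H^t = (H^t_x, H^t_y, H^t_z), E^t = (E^t_x, E^t_y, E^t_z). Then the discrete divergences are exactly conserved: for all t ∈ ℝ, D₁(ε E^t_x) + D₂(ε E^t_y) + D₃(ε E^t_z) = D₁(ε E⁰_x) + D₂(ε E⁰_y) + D₃(ε E⁰_z) and D₁(μ H^t_x) + D₂(μ H^t_y) + D₃(μ H^t_z) = D₁(μ H⁰_x) + D₂(μ H⁰_y) + D₃(μ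 H⁰_z). -/
/-! The block row `P = [D₁ D₂ D₃]` is the discrete divergence, and `P * 𝔻 = 0` (div ∘ curl = 0)
because the `Dᵢ` commute. Hence `diag(P, P)` annihilates `𝒟`, so it is unchanged by right
multiplication with `exp (t • 𝒟)`, and `diag(P, P) (√μ Hᵗ, √ε Eᵗ)` does not depend on `t`. -/

open Matrix

theorem Matrix.mul_exp_eq_self_of_mul_eq_zero {𝕂 l m : Type*} [RCLike 𝕂] [Fintype m]
    [DecidableEq m] (P : Matrix l m 𝕂) (A : Matrix m m 𝕂) (h : P * A = 0) :
    P * NormedSpace.exp A = P := by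
  open scoped Norms.Operator in
  have hseries := (NormedSpace.exp_series_hasSum_exp' (𝕂 := 𝕂) A).map
    (addMonoidHomMulLeft P) (continuous_const.matrix_mul continuous_id)
  refine (hseries.unique (hasSum_single 0 fun k hk => ?_)).trans (by simp)
  obtain ⟨k, rfl⟩ := Nat.exists_eq_succ_of_ne_zero hk
  simp [pow_succ', ← Matrix.mul_assoc, h]

section DiscreteDivergence

variable {N : ℕ} {R : Type*}

def discreteDiv (D1 D2 D3 : Matrix (Fin N) (Fin N) R) :
    Matrix (Fin N) (Fin 3 × Fin N) R :=
  Matrix.of fun a q => ![D1, D2, D3] q.1 a q.2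

theorem discreteDiv_mulVec [NonUnitalNonAssocSemiring R] (D1 D2 D3 : Matrix (Fin N) (Fin N) R)
    (v : Fin 3 × Fin N → R) :
    discreteDiv D1 D2 D3 *ᵥ v =
      D1 *ᵥ (fun a => v (0, a)) + D2 *ᵥ (fun a => v (1, a)) + D3 *ᵥ (fun a => v (2, a)) := by
  ext a
  simp only [discreteDiv, mulVec, dotProduct, of_apply, Fintype.sum_prod_type, Fin.sum_univ_three,
    cons_val_zero, cons_val_one, cons_val_two, Pi.add_apply]
  rfl

theorem discreteDiv_mul_blockMat3 [NonUnitalNonAssocSemiring R]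
    (D1 D2 D3 : Matrix (Fin N) (Fin N) R) (A : Fin 3 → Fin 3 → Matrix (Fin N) (Fin N) R)
    (a : Fin N) (q : Fin 3 × Fin N) :
    (discreteDiv D1 D2 D3 * blockMat3 A) a q =
      (D1 * A 0 q.1 + D2 * A 1 q.1 + D3 * A 2 q.1) a q.2 := by
  simp only [discreteDiv, blockMat3, mul_apply, of_apply, Fintype.sum_prod_type, Fin.sum_univ_three,
    cons_val_zero, cons_val_one, cons_val_two, Matrix.add_apply]
  rfl

theorem discreteDiv_mul_curl [Ring R] {D1 D2 D3 : Matrix (Fin N) (Fin N) R}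
    (h12 : D1 * D2 = D2 * D1) (h13 : D1 * D3 = D3 * D1) (h23 : D2 * D3 = D3 * D2) :
    discreteDiv D1 D2 D3 * blockMat3 ![![0, -D3, D2], ![D3, 0, -D1], ![-D2, D1, 0]] = 0 := by
  ext a ⟨j, b⟩
  rw [discreteDiv_mul_blockMat3]
  fin_cases j <;> simp [h12, h13, h23]

end DiscreteDivergence

theorem discrete_divergence_conservation_general {N : ℕ} (μ ε : ℝ) (hμ : 0 < μ) (hε : 0 < ε)
    (D1 D2 D3 : Matrix (Fin N) (Fin N) ℝ)
    (h12 : D1 * D2 = D2 * D1) (h13 : D1 * D3 = D3 * D1) (h23 : D2 * D3 = D3 * D2)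
    (𝔻 : Matrix (Fin 3 × Fin N) (Fin 3 × Fin N) ℝ)
    (h𝔻 : 𝔻 = blockMat3 ![![0, -D3, D2], ![D3, 0, -D1], ![-D2, D1, 0]])
    (𝒟 : Matrix ((Fin 3 × Fin N) ⊕ (Fin 3 × Fin N)) ((Fin 3 × Fin N) ⊕ (Fin 3 × Fin N)) ℝ)
    (h𝒟 : 𝒟 = (Real.sqrt (μ * ε))⁻¹ • Matrix.fromBlocks 0 (-𝔻) 𝔻 0)
    (H E : ℝ → (Fin 3 × Fin N → ℝ))
    (hprop : ∀ t : ℝ,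
      Sum.elim (fun i => Real.sqrt μ * H t i) (fun i => Real.sqrt ε * E t i) =
        (NormedSpace.exp (t • 𝒟)).mulVec
          (Sum.elim (fun i => Real.sqrt μ * H 0 i) (fun i => Real.sqrt ε * E 0 i))) :
    ∀ t : ℝ,
      (D1.mulVec (fun a => ε * E t (0, a)) + D2.mulVec (fun a => ε * E t (1, a)) +
          D3.mulVec (fun a => ε * E t (2, a)) =
        D1.mulVec (fun a => ε * E 0 (0, a)) + D2.mulVec (fun a => ε * E 0 (1, a)) +
          D3.mulVec (fun a => ε * E 0 (2, a))) ∧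
      (D1.mulVec (fun a => μ * H t (0, a)) + D2.mulVec (fun a => μ * H t (1, a)) +
          D3.mulVec (fun a => μ * H t (2, a)) =
        D1.mulVec (fun a => μ * H 0 (0, a)) + D2.mulVec (fun a => μ * H 0 (1, a)) +
          D3.mulVec (fun a => μ * H 0 (2, a))) := by
  intro t
  set P := discreteDiv D1 D2 D3
  have hP𝔻 : P * 𝔻 = 0 := h𝔻 ▸ discreteDiv_mul_curl h12 h13 h23
  have hP𝒟 : fromBlocks P 0 0 P * (t • 𝒟) = 0 := by
    simp [h𝒟, fromBlocks_multiply, hP𝔻]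
  have hconst := congrArg (fromBlocks P 0 0 P *ᵥ ·) (hprop t)
  simp only [mulVec_mulVec, mul_exp_eq_self_of_mul_eq_zero _ _ hP𝒟, fromBlocks_mulVec,
    Sum.elim_comp_inl, Sum.elim_comp_inr, zero_mulVec, add_zero, zero_add, Sum.elim_eq_iff] at hconst
  have rescale {c : ℝ} (hc : 0 < c) (F : ℝ → Fin 3 × Fin N → ℝ)
      (h : (P *ᵥ fun i => √c * F t i) = P *ᵥ fun i => √c * F 0 i) :
      (P *ᵥ fun i => c * F t i) = P *ᵥ fun i => c * F 0 i := by
    change P *ᵥ (√c • F t) = P *ᵥ (√c • F 0) at h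
    rw [mulVec_smul, mulVec_smul] at h
    change P *ᵥ (c • F t) = P *ᵥ (c • F 0)
    rw [mulVec_smul, mulVec_smul, smul_right_injective _ (Real.sqrt_pos.2 hc).ne' h]
  simpa only [P, discreteDiv_mulVec] using And.intro (rescale hε E hconst.2) (rescale hμ H hconst.1)

/-- the fully discrete exponential scheme exactly conserves the discrete divergences: `D₁(εEᵗ_x) + D₂(εEᵗ_y) + D₃(εEᵗ_z)` and `D₁(μHᵗ_x) + D₂(μHᵗ_y) + D₃(μHᵗ_z)` are constant in `t`. -/
theorem discrete_divergence_conservation {N : ℕ} (hN : 0 < N) (μ ε : ℝ) (hμ : 0 < μ) (hε : 0 < ε)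
    (D1 D2 D3 : Matrix (Fin N) (Fin N) ℝ)
    (h12 : D1 * D2 = D2 * D1) (h13 : D1 * D3 = D3 * D1) (h23 : D2 * D3 = D3 * D2)
    (hD1 : D1ᵀ = -D1) (hD2 : D2ᵀ = -D2) (hD3 : D3ᵀ = -D3)
    (𝔻 : Matrix (Fin 3 × Fin N) (Fin 3 × Fin N) ℝ)
    (h𝔻 : 𝔻 = blockMat3 ![![0, -D3, D2], ![D3, 0, -D1], ![-D2, D1, 0]])
    (𝒟 : Matrix ((Fin 3 × Fin N) ⊕ (Fin 3 × Fin N)) ((Fin 3 × Fin N) ⊕ (Fin 3 × Fin N)) ℝ)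
    (h𝒟 : 𝒟 = (Real.sqrt (μ * ε))⁻¹ • Matrix.fromBlocks 0 (-𝔻) 𝔻 0)
    (H E : ℝ → (Fin 3 × Fin N → ℝ))
    (hprop : ∀ t : ℝ,
      Sum.elim (fun i => Real.sqrt μ * H t i) (fun i => Real.sqrt ε * E t i) =
        (NormedSpace.exp (t • 𝒟)).mulVec
          (Sum.elim (fun i => Real.sqrt μ * H 0 i) (fun i => Real.sqrt ε * E 0 i))) :
    ∀ t : ℝ,
      (D1.mulVec (fun a => ε * E t (0, a)) + D2.mulVec (fun a => ε * E t (1, a)) +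
          D3.mulVec (fun a => ε * E t (2, a)) =
        D1.mulVec (fun a => ε * E 0 (0, a)) + D2.mulVec (fun a => ε * E 0 (1, a)) +
          D3.mulVec (fun a => ε * E 0 (2, a))) ∧
      (D1.mulVec (fun a => μ * H t (0, a)) + D2.mulVec (fun a => μ * H t (1, a)) +
          D3.mulVec (fun a => μ * H t (2, a)) =
        D1.mulVec (fun a => μ * H 0 (0, a)) + D2.mulVec (fun a => μ * H 0 (1, a)) +
          D3.mulVec (fun a => μ * H 0 (2, a))) :=
  discrete_divergence_conservation_general μ ε hμ hε D1 D2 D3 h12 h13 h23 𝔻 h𝔻 𝒟 h𝒟 H E hprop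
end
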